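/- Let I_1: E_1 → E_2 and I_2: E_2 → E_3 be fiber-preserving isomorphisms of standard Courant algebroid data over a manifold M, where E_i = T*M ⊕ 𝒢_i ⊕ TM, with I_1 determined by (β_1, K_1, Φ_1) and I_2 by (β_2, K_2, Φ_2) via the formula I(η) = η, I(r) = −2Φ*K(r) + K(r), I(X) = i_X β − Φ*Φ(X) + Φ(X) + X. Then the composition I_2 ∘ I_1 is determined by (β_3, K_3, Φ_3) with K_3 = K_2 K_1, Φ_3 = Φ_2 + K_2 Φ_1, and β_3(X,Y) = (β_1 + β_2)(X,Y) + ⟨Φ_2(X), K_2 Φ_1(Y)⟩ − ⟨Φ_2(Y), K_2 Φ_1(X)⟩. -/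

import Mathlib

/-- The fiberwise model of a fiber-preserving isomorphism of standard Courant algebroids
`T*M ⊕ 𝒢 ⊕ TM → T*M ⊕ 𝒢' ⊕ TM` determined by data `(β, K, Φ)`:
`I(η, r, X) = (η − 2⟨K r, Φ ·⟩ + β(X, ·) − ⟨Φ X, Φ ·⟩, K r + Φ X, X)`,
where `g = ⟨·,·⟩` is the scalar product on the target `𝒢' = W'`. -/
noncomputable def stdCourantMap {V W W' : Type*} [AddCommGroup V] [Module ℝ V]
    [AddCommGroup W] [Module ℝ W] [AddCommGroup W'] [Module ℝ W']
    (g : W' →ₗ[ℝ] W' →ₗ[ℝ] ℝ) (β : V →ₗ[ℝ] Module.Dual ℝ V)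
    (K : W →ₗ[ℝ] W') (Φ : V →ₗ[ℝ] W') :
    (Module.Dual ℝ V × W × V) →ₗ[ℝ] (Module.Dual ℝ V × W' × V) :=
  letI pη := LinearMap.fst ℝ (Module.Dual ℝ V) (W × V)
  letI pr := (LinearMap.fst ℝ W V).comp (LinearMap.snd ℝ (Module.Dual ℝ V) (W × V))
  letI pX := (LinearMap.snd ℝ W V).comp (LinearMap.snd ℝ (Module.Dual ℝ V) (W × V))
  (pη - (2 : ℝ) • (Φ.dualMap.comp (g.comp (K.comp pr))) + β.comp pX
      - Φ.dualMap.comp (g.comp (Φ.comp pX))).prod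
    ((K.comp pr + Φ.comp pX).prod pX)

section

variable {V W W' : Type*} [AddCommGroup V] [Module ℝ V] [AddCommGroup W] [Module ℝ W]
  [AddCommGroup W'] [Module ℝ W'] (g : W' →ₗ[ℝ] W' →ₗ[ℝ] ℝ) (β : V →ₗ[ℝ] Module.Dual ℝ V)
  (K : W →ₗ[ℝ] W') (Φ : V →ₗ[ℝ] W') (p : Module.Dual ℝ V × W × V)

theorem stdCourantMap_apply_fst_apply (Y : V) :
    (stdCourantMap g β K Φ p).1 Y
      = p.1 Y - 2 * g (K p.2.1) (Φ Y) + β p.2.2 Y - g (Φ p.2.2) (Φ Y) := by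
  simp [stdCourantMap]

theorem stdCourantMap_apply_snd_fst : (stdCourantMap g β K Φ p).2.1 = K p.2.1 + Φ p.2.2 := rfl

theorem stdCourantMap_apply_snd_snd : (stdCourantMap g β K Φ p).2.2 = p.2.2 := rfl

end

theorem stdCourantMap_comp_general {V W₁ W₂ W₃ : Type*} [AddCommGroup V] [Module ℝ V]
    [AddCommGroup W₁] [Module ℝ W₁] [AddCommGroup W₂] [Module ℝ W₂]
    [AddCommGroup W₃] [Module ℝ W₃]
    (g₂ : W₂ →ₗ[ℝ] W₂ →ₗ[ℝ] ℝ) (g₃ : W₃ →ₗ[ℝ] W₃ →ₗ[ℝ] ℝ)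
    (β₁ β₂ : V →ₗ[ℝ] Module.Dual ℝ V)
    (K₁ : W₁ →ₗ[ℝ] W₂) (K₂ : W₂ →ₗ[ℝ] W₃)
    (hK₂ : ∀ a b, g₃ (K₂ a) (K₂ b) = g₂ a b)
    (Φ₁ : V →ₗ[ℝ] W₂) (Φ₂ : V →ₗ[ℝ] W₃) :
    (stdCourantMap g₃ β₂ K₂ Φ₂).comp (stdCourantMap g₂ β₁ K₁ Φ₁)
      = stdCourantMap g₃
          (β₁ + β₂ + (K₂.comp Φ₁).dualMap.comp (g₃.comp Φ₂)
            - Φ₂.dualMap.comp (g₃.comp (K₂.comp Φ₁)))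
          (K₂.comp K₁) (Φ₂ + K₂.comp Φ₁) := by
  refine LinearMap.ext fun p ↦ Prod.ext (LinearMap.ext fun Y ↦ ?_) (Prod.ext ?_ rfl)
  -- Isometry of `K₂` turns the `g₃`-terms through `K₂` into the `g₂`-terms of the first map; the
  -- cross terms of `⟨Φ₃ X, Φ₃ Y⟩` are absorbed by the correction in `β₃`.
  · simp only [LinearMap.comp_apply, stdCourantMap_apply_fst_apply, stdCourantMap_apply_snd_fst,
      stdCourantMap_apply_snd_snd, LinearMap.add_apply, LinearMap.sub_apply,
      LinearMap.dualMap_apply, map_add, hK₂]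
    ring
  · simp only [LinearMap.comp_apply, stdCourantMap_apply_snd_fst, stdCourantMap_apply_snd_snd,
      LinearMap.add_apply, map_add]
    abel

/-- The composition of two fiber-preserving isomorphisms of standard Courant
algebroids, determined by data `(β₁, K₁, Φ₁)` and `(β₂, K₂, Φ₂)` (with the `K_i` isometric
isomorphisms of the quadratic Lie algebra bundles and the `β_i` two-forms), is determined by
`(β₃, K₃, Φ₃)` with `K₃ = K₂K₁`, `Φ₃ = Φ₂ + K₂Φ₁` and
`β₃(X,Y) = (β₁+β₂)(X,Y) + ⟨Φ₂X, K₂Φ₁Y⟩ − ⟨Φ₂Y, K₂Φ₁X⟩`. -/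
theorem stdCourantMap_comp {V W₁ W₂ W₃ : Type*} [AddCommGroup V] [Module ℝ V]
    [AddCommGroup W₁] [Module ℝ W₁] [AddCommGroup W₂] [Module ℝ W₂]
    [AddCommGroup W₃] [Module ℝ W₃]
    (g₁ : W₁ →ₗ[ℝ] W₁ →ₗ[ℝ] ℝ) (g₂ : W₂ →ₗ[ℝ] W₂ →ₗ[ℝ] ℝ) (g₃ : W₃ →ₗ[ℝ] W₃ →ₗ[ℝ] ℝ)
    (hg₂symm : ∀ a b, g₂ a b = g₂ b a) (hg₃symm : ∀ a b, g₃ a b = g₃ b a)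
    (β₁ β₂ : V →ₗ[ℝ] Module.Dual ℝ V)
    (hβ₁ : ∀ X Y, β₁ X Y = - β₁ Y X) (hβ₂ : ∀ X Y, β₂ X Y = - β₂ Y X)
    (K₁ : W₁ →ₗ[ℝ] W₂) (K₂ : W₂ →ₗ[ℝ] W₃)
    (hK₁bij : Function.Bijective K₁) (hK₂bij : Function.Bijective K₂)
    (hK₁ : ∀ a b, g₂ (K₁ a) (K₁ b) = g₁ a b) (hK₂ : ∀ a b, g₃ (K₂ a) (K₂ b) = g₂ a b)
    (Φ₁ : V →ₗ[ℝ] W₂) (Φ₂ : V →ₗ[ℝ] W₃) :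
    (stdCourantMap g₃ β₂ K₂ Φ₂).comp (stdCourantMap g₂ β₁ K₁ Φ₁)
      = stdCourantMap g₃
          (β₁ + β₂ + (K₂.comp Φ₁).dualMap.comp (g₃.comp Φ₂)
            - Φ₂.dualMap.comp (g₃.comp (K₂.comp Φ₁)))
          (K₂.comp K₁) (Φ₂ + K₂.comp Φ₁) :=
  stdCourantMap_comp_general g₂ g₃ β₁ β₂ K₁ K₂ hK₂ Φ₁ Φ₂
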